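/- Let V be a 4-dimensional inner product space with orthonormal basis e₁,…,e₄, and let Rm be an algebraic curvature operator on Λ²V whose components satisfy: R_{ijkl} = (R/6)(δ_{il}δ_{jk} − δ_{ik}δ_{jl}) + E_{ijkl} for 1 ≤ i,j,k,l ≤ 3 with |E| ≤ εR, R_{4jk4} = (R²/9)δ_{jk} + F_{jk} with |F| ≤ εR², and |R_{ijk4}| ≤ εR^{3/2} for 1 ≤ i,j,k ≤ 3, where R > 0. Then, for ε sufficiently small (depending only on dimension), Rm is a positive operator on Λ²V: for every nonzero 2-form φ = Σ a_{ij} eᵢ∧eⱼ + Σ b_k e_k∧e₄, one has Rm(φ,φ) ≥ (R/3)|A|²(1−o(1)) + (R²/9)|b|²(1−o(1)) − C|A||b|εR^{3/2} > 0. -/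
import Mathlib
set_option maxHeartbeats 1000000

open Finset

/-- model curvature sum for the tangential part -/
lemma stmt8_modelA (R : ℝ) (a : Fin 3 → Fin 3 → ℝ) (ha : ∀ i j, a j i = - a i j) :
    (∑ i, ∑ j, ∑ k, ∑ l, a i j * a l k * ((R / 6) *
      ((if i = l then (1:ℝ) else 0) * (if j = k then 1 else 0)
        - (if i = k then 1 else 0) * (if j = l then 1 else 0))))
    = (R/3) * (∑ i, ∑ j, (a i j)^2) := by
  have h00 : a 0 0 = 0 := by have := ha 0 0; linarith
  have h11 : a 1 1 = 0 := by have := ha 1 1; linarith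
  have h22 : a 2 2 = 0 := by have := ha 2 2; linarith
  have h10 : a 1 0 = - a 0 1 := ha 0 1
  have h20 : a 2 0 = - a 0 2 := ha 0 2
  have h21 : a 2 1 = - a 1 2 := ha 1 2
  simp [Fin.sum_univ_three, h00, h11, h22, h10, h20, h21]
  ring

lemma stmt8_modelB (R : ℝ) (b : Fin 3 → ℝ) :
    (∑ j, ∑ k, b j * b k * ((R^2/9) * (if j = k then (1:ℝ) else 0)))
      = (R^2/9) * (∑ k, (b k)^2) := by
  simp [Fin.sum_univ_three]
  ring

/-- splitting of the quadruple sum -/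
lemma stmt8_splitA (R : ℝ) (Rm3 : Fin 3 → Fin 3 → Fin 3 → Fin 3 → ℝ)
    (a : Fin 3 → Fin 3 → ℝ) :
    (∑ i, ∑ j, ∑ k, ∑ l, a i j * a l k * Rm3 i j k l)
    = (∑ i, ∑ j, ∑ k, ∑ l, a i j * a l k * ((R / 6) *
        ((if i = l then (1:ℝ) else 0) * (if j = k then 1 else 0)
          - (if i = k then 1 else 0) * (if j = l then 1 else 0))))
      + (∑ i, ∑ j, ∑ k, ∑ l, a i j * a l k * (Rm3 i j k l - (R / 6) *
        ((if i = l then (1:ℝ) else 0) * (if j = k then 1 else 0)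
          - (if i = k then 1 else 0) * (if j = l then 1 else 0)))) := by
  rw [← Finset.sum_add_distrib]
  refine Finset.sum_congr rfl fun i _ => ?_
  rw [← Finset.sum_add_distrib]
  refine Finset.sum_congr rfl fun j _ => ?_
  rw [← Finset.sum_add_distrib]
  refine Finset.sum_congr rfl fun k _ => ?_
  rw [← Finset.sum_add_distrib]
  refine Finset.sum_congr rfl fun l _ => ?_
  ring

lemma stmt8_splitB (R : ℝ) (Rrad : Fin 3 → Fin 3 → ℝ) (b : Fin 3 → ℝ) :
    (∑ j, ∑ k, b j * b k * Rrad j k)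
    = (∑ j, ∑ k, b j * b k * ((R^2/9) * (if j = k then (1:ℝ) else 0)))
      + (∑ j, ∑ k, b j * b k * (Rrad j k - (R^2/9) * (if j = k then (1:ℝ) else 0))) := by
  rw [← Finset.sum_add_distrib]
  refine Finset.sum_congr rfl fun j _ => ?_
  rw [← Finset.sum_add_distrib]
  refine Finset.sum_congr rfl fun k _ => ?_
  ring

/-- bound for a quadruple error sum -/
lemma stmt8_errA (M : ℝ) (f : Fin 3 → Fin 3 → Fin 3 → Fin 3 → ℝ)
    (hf : ∀ i j k l, |f i j k l| ≤ M) (a : Fin 3 → Fin 3 → ℝ) :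
    |∑ i, ∑ j, ∑ k, ∑ l, a i j * a l k * f i j k l|
      ≤ (∑ i, ∑ j, |a i j|) * (∑ i, ∑ j, |a i j|) * M := by
  have step : |∑ i, ∑ j, ∑ k, ∑ l, a i j * a l k * f i j k l|
      ≤ ∑ i, ∑ j, ∑ k, ∑ l, |a i j| * |a l k| * M := by
    refine (Finset.abs_sum_le_sum_abs _ _).trans (Finset.sum_le_sum fun i _ => ?_)
    refine (Finset.abs_sum_le_sum_abs _ _).trans (Finset.sum_le_sum fun j _ => ?_)
    refine (Finset.abs_sum_le_sum_abs _ _).trans (Finset.sum_le_sum fun k _ => ?_)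
    refine (Finset.abs_sum_le_sum_abs _ _).trans (Finset.sum_le_sum fun l _ => ?_)
    rw [abs_mul, abs_mul]
    exact mul_le_mul_of_nonneg_left (hf i j k l) (by positivity)
  refine step.trans (le_of_eq ?_)
  simp only [Fin.sum_univ_three]
  ring

lemma stmt8_errB (M : ℝ) (f : Fin 3 → Fin 3 → ℝ)
    (hf : ∀ j k, |f j k| ≤ M) (b : Fin 3 → ℝ) :
    |∑ j, ∑ k, b j * b k * f j k|
      ≤ (∑ k, |b k|) * (∑ k, |b k|) * M := by
  have step : |∑ j, ∑ k, b j * b k * f j k| ≤ ∑ j, ∑ k, |b j| * |b k| * M := by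
    refine (Finset.abs_sum_le_sum_abs _ _).trans (Finset.sum_le_sum fun j _ => ?_)
    refine (Finset.abs_sum_le_sum_abs _ _).trans (Finset.sum_le_sum fun k _ => ?_)
    rw [abs_mul, abs_mul]
    exact mul_le_mul_of_nonneg_left (hf j k) (by positivity)
  refine step.trans (le_of_eq ?_)
  simp only [Fin.sum_univ_three]
  ring

lemma stmt8_errMix (M : ℝ) (g : Fin 3 → Fin 3 → Fin 3 → ℝ)
    (hg : ∀ i j k, |g i j k| ≤ M) (a : Fin 3 → Fin 3 → ℝ) (b : Fin 3 → ℝ) :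
    |∑ i, ∑ j, ∑ k, a i j * b k * g i j k|
      ≤ (∑ i, ∑ j, |a i j|) * (∑ k, |b k|) * M := by
  have step : |∑ i, ∑ j, ∑ k, a i j * b k * g i j k|
      ≤ ∑ i, ∑ j, ∑ k, |a i j| * |b k| * M := by
    refine (Finset.abs_sum_le_sum_abs _ _).trans (Finset.sum_le_sum fun i _ => ?_)
    refine (Finset.abs_sum_le_sum_abs _ _).trans (Finset.sum_le_sum fun j _ => ?_)
    refine (Finset.abs_sum_le_sum_abs _ _).trans (Finset.sum_le_sum fun k _ => ?_)
    rw [abs_mul, abs_mul]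
    exact mul_le_mul_of_nonneg_left (hg i j k) (by positivity)
  refine step.trans (le_of_eq ?_)
  simp only [Fin.sum_univ_three]
  ring

/-- An algebraic curvature operator on a 4-dimensional inner product space
which is `ε`-close (in the stated componentwise sense) to the curvature of the round
cylinder `(S³/Γ) × ℝ` is, for `ε` small, a positive operator on `Λ²V`: for every nonzero
2-form `φ = Σ a_{ij} eᵢ∧eⱼ + Σ b_k e_k∧e₄`,
`Rm(φ,φ) ≥ (R/3)|A|²(1-Cε) + (R²/9)|b|²(1-Cε) - Cε R^{3/2}|A||b| > 0`. -/
theorem stmt8 :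
    ∃ ε₀ > (0:ℝ), ∃ C > (0:ℝ),
      ∀ (ε R : ℝ), 0 < ε → ε ≤ ε₀ → 0 < R →
      ∀ (Rm3 : Fin 3 → Fin 3 → Fin 3 → Fin 3 → ℝ)
        (Rrad : Fin 3 → Fin 3 → ℝ) (Rmix : Fin 3 → Fin 3 → Fin 3 → ℝ),
      (∀ i j k l, |Rm3 i j k l - (R / 6) *
          ((if i = l then (1:ℝ) else 0) * (if j = k then 1 else 0)
            - (if i = k then 1 else 0) * (if j = l then 1 else 0))| ≤ ε * R) →
      (∀ j k, |Rrad j k - (R ^ 2 / 9) * (if j = k then (1:ℝ) else 0)| ≤ ε * R ^ 2) →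
      (∀ i j k, |Rmix i j k| ≤ ε * R ^ ((3:ℝ)/2)) →
      ∀ (a : Fin 3 → Fin 3 → ℝ) (b : Fin 3 → ℝ),
        (∀ i j, a j i = - a i j) →
        (¬ (∀ i j, a i j = 0) ∨ ¬ (∀ k, b k = 0)) →
        (R / 3) * (∑ i, ∑ j, (a i j) ^ 2) * (1 - C * ε)
            + (R ^ 2 / 9) * (∑ k, (b k) ^ 2) * (1 - C * ε)
            - C * ε * R ^ ((3:ℝ)/2)
              * Real.sqrt (∑ i, ∑ j, (a i j) ^ 2) * Real.sqrt (∑ k, (b k) ^ 2)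
          ≤ (∑ i, ∑ j, ∑ k, ∑ l, a i j * a l k * Rm3 i j k l)
            + (∑ j, ∑ k, b j * b k * Rrad j k)
            - 2 * (∑ i, ∑ j, ∑ k, a i j * b k * Rmix i j k)
        ∧ 0 < (∑ i, ∑ j, ∑ k, ∑ l, a i j * a l k * Rm3 i j k l)
            + (∑ j, ∑ k, b j * b k * Rrad j k)
            - 2 * (∑ i, ∑ j, ∑ k, a i j * b k * Rmix i j k) := by
  refine ⟨1/1000, by norm_num, 27, by norm_num, ?_⟩
  intro ε R hε hε0 hR Rm3 Rrad Rmix hRm3 hRrad hRmix a b ha hnz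
  -- raw facts
  have hsplitA := stmt8_splitA R Rm3 a
  have hmodelA := stmt8_modelA R a ha
  have hsplitB := stmt8_splitB R Rrad b
  have hmodelB := stmt8_modelB R b
  have herrA := stmt8_errA (ε * R) _ hRm3 a
  have herrB := stmt8_errB (ε * R^2) _ hRrad b
  have herrMix := stmt8_errMix (ε * R ^ ((3:ℝ)/2)) _ hRmix a b
  rw [hmodelA] at hsplitA
  rw [hmodelB] at hsplitB
  -- abstraction
  set SA := ∑ i, ∑ j, (a i j)^2 with hSAdef
  set Sb := ∑ k, (b k)^2 with hSbdef
  set TA := ∑ i, ∑ j, |a i j| with hTAdef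
  set Tb := ∑ k, |b k| with hTbdef
  set QA := ∑ i, ∑ j, ∑ k, ∑ l, a i j * a l k * Rm3 i j k l with hQAdef
  set QB := ∑ j, ∑ k, b j * b k * Rrad j k with hQBdef
  set Qm := ∑ i, ∑ j, ∑ k, a i j * b k * Rmix i j k with hQmdef
  set EA := ∑ i, ∑ j, ∑ k, ∑ l, a i j * a l k * (Rm3 i j k l - (R / 6) *
        ((if i = l then (1:ℝ) else 0) * (if j = k then 1 else 0)
          - (if i = k then 1 else 0) * (if j = l then 1 else 0))) with hEAdef
  set EB := ∑ j, ∑ k, b j * b k * (Rrad j k - (R^2/9) * (if j = k then (1:ℝ) else 0)) with hEBdef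
  have hSA0 : 0 ≤ SA := by positivity
  have hSb0 : 0 ≤ Sb := by positivity
  have hTA0 : 0 ≤ TA := by positivity
  have hTb0 : 0 ≤ Tb := by positivity
  have hTA2 : TA^2 ≤ 9 * SA := by
    have h := sq_sum_le_card_mul_sum_sq
      (s := (Finset.univ : Finset (Fin 3 × Fin 3))) (f := fun p => |a p.1 p.2|)
    simpa [Fintype.sum_prod_type, sq_abs, ← hTAdef, ← hSAdef] using h
  have hTb2 : Tb^2 ≤ 3 * Sb := by
    have h := sq_sum_le_card_mul_sum_sq
      (s := (Finset.univ : Finset (Fin 3))) (f := fun k => |b k|)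
    simpa [sq_abs, ← hTbdef, ← hSbdef] using h
  clear_value SA Sb TA Tb QA QB Qm EA EB
  clear hRm3 hRrad hRmix
  -- square roots
  set sA := Real.sqrt SA with hsAdef
  set sb := Real.sqrt Sb with hsbdef
  have hsA0 : 0 ≤ sA := Real.sqrt_nonneg _
  have hsb0 : 0 ≤ sb := Real.sqrt_nonneg _
  have hsA2 : sA^2 = SA := Real.sq_sqrt hSA0
  have hsb2 : sb^2 = Sb := Real.sq_sqrt hSb0
  clear_value sA sb
  set r := Real.sqrt R with hrdef
  have hr0 : 0 < r := Real.sqrt_pos.mpr hR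
  have hr2 : r^2 = R := Real.sq_sqrt hR.le
  set R32 := R ^ ((3:ℝ)/2) with hR32def
  have hR32 : R32 = r * R := by
    rw [hR32def, show (3:ℝ)/2 = 1/2 + 1 by norm_num, Real.rpow_add hR,
      Real.rpow_one, ← Real.sqrt_eq_rpow]
  have hR320 : 0 < R32 := by rw [hR32]; positivity
  clear_value r R32
  -- derived comparisons
  have hTAsA : TA ≤ 3 * sA := by
    have h1 : TA = Real.sqrt (TA^2) := (Real.sqrt_sq hTA0).symm
    have h2 : Real.sqrt (TA^2) ≤ Real.sqrt (9*SA) := Real.sqrt_le_sqrt hTA2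
    have h3 : Real.sqrt (9*SA) = 3 * sA := by
      rw [hsAdef, show (9:ℝ)*SA = 3^2*SA by norm_num,
        Real.sqrt_mul (by positivity) SA, Real.sqrt_sq (by norm_num)]
    linarith only [h1, h2, h3]
  have hTbsb : Tb ≤ 2 * sb := by
    have h1 : Tb = Real.sqrt (Tb^2) := (Real.sqrt_sq hTb0).symm
    have h2 : Real.sqrt (Tb^2) ≤ Real.sqrt (4*Sb) :=
      Real.sqrt_le_sqrt (by linarith only [hTb2, hSb0])
    have h3 : Real.sqrt (4*Sb) = 2 * sb := by
      rw [hsbdef, show (4:ℝ)*Sb = 2^2*Sb by norm_num,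
        Real.sqrt_mul (by positivity) Sb, Real.sqrt_sq (by norm_num)]
    linarith only [h1, h2, h3]
  have hEA : |EA| ≤ 9 * SA * (ε * R) := by
    refine herrA.trans ?_
    have h9 : TA * TA ≤ 9 * SA := by rw [← pow_two]; exact hTA2
    exact mul_le_mul_of_nonneg_right h9 (by positivity)
  have hEB : |EB| ≤ 3 * Sb * (ε * R^2) := by
    refine herrB.trans ?_
    have h3 : Tb * Tb ≤ 3 * Sb := by rw [← pow_two]; exact hTb2
    exact mul_le_mul_of_nonneg_right h3 (by positivity)
  have hQm : |Qm| ≤ 6 * (sA * sb) * (ε * R32) := by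
    refine herrMix.trans ?_
    have hTT : TA * Tb ≤ 6 * (sA * sb) := by
      have h := mul_le_mul hTAsA hTbsb hTb0 (by linarith only [hsA0] : (0:ℝ) ≤ 3 * sA)
      have e : 3 * sA * (2 * sb) = 6 * (sA * sb) := by ring
      linarith only [h, e]
    exact mul_le_mul_of_nonneg_right hTT (by positivity)
  have hEA' := abs_le.mp hEA
  have hEB' := abs_le.mp hEB
  have hQm' := abs_le.mp hQm
  have hcross0 : 0 ≤ ε * R32 * sA * sb := by positivity
  have hAMGM : 6 * (R32 * (sA * sb)) ≤ 9 * (R * SA) + R^2 * Sb := by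
    have h := sq_nonneg (3*r*sA - R*sb)
    have e : (3*r*sA - R*sb)^2
        = 9*(r^2*(sA^2)) + R^2*(sb^2) - 6*((r*R)*(sA*sb)) := by ring
    rw [e, hr2, hsA2, hsb2, ← hR32] at h
    linarith only [h]
  constructor
  · linarith only [hQm'.1, hQm'.2, hEA'.1, hEB'.1, hcross0, hsplitA, hsplitB]
  · have hcross : 2*ε * (6 * (R32 * (sA * sb)))
        ≤ 2*ε * (9 * (R * SA) + R^2 * Sb) :=
      mul_le_mul_of_nonneg_left hAMGM (by linarith)
    have hRSA0 : 0 ≤ R * SA := by positivity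
    have hR2Sb0 : 0 ≤ R^2 * Sb := by positivity
    have hεRSA : ε * (R * SA) ≤ (1/1000) * (R * SA) :=
      mul_le_mul_of_nonneg_right hε0 hRSA0
    have hεR2Sb : ε * (R^2 * Sb) ≤ (1/1000) * (R^2 * Sb) :=
      mul_le_mul_of_nonneg_right hε0 hR2Sb0
    have hpos : 0 < SA ∨ 0 < Sb := by
      rcases hnz with h | h
      · left
        push_neg at h
        obtain ⟨i, j, hij⟩ := h
        have h1 : (a i j)^2 ≤ ∑ j', (a i j')^2 :=
          Finset.single_le_sum (f := fun j' => (a i j')^2)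
            (fun _ _ => sq_nonneg _) (Finset.mem_univ j)
        have h2 : (∑ j', (a i j')^2) ≤ SA := by
          rw [hSAdef]
          exact Finset.single_le_sum (f := fun i' => ∑ j', (a i' j')^2)
            (fun _ _ => by positivity) (Finset.mem_univ i)
        have h3 : 0 < (a i j)^2 := pow_pos (abs_pos.mpr hij) 2 |>.trans_le (by rw [sq_abs])
        linarith
      · right
        push_neg at h
        obtain ⟨k, hk⟩ := h
        have h1 : (b k)^2 ≤ Sb := by
          rw [hSbdef]
          exact Finset.single_le_sum (f := fun k' => (b k')^2)
            (fun _ _ => sq_nonneg _) (Finset.mem_univ k)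
        have h3 : 0 < (b k)^2 := by positivity
        linarith
    rcases hpos with hSA | hSb
    · have hRSA : 0 < R * SA := by positivity
      linarith only [hQm'.2, hEA'.1, hEB'.1, hcross, hεRSA, hεR2Sb, hRSA, hR2Sb0,
        hsplitA, hsplitB, hR320, hsA0, hsb0, hε]
    · have hR2Sb : 0 < R^2 * Sb := by positivity
      linarith only [hQm'.2, hEA'.1, hEB'.1, hcross, hεRSA, hεR2Sb, hR2Sb, hRSA0,
        hsplitA, hsplitB, hR320, hsA0, hsb0, hε]
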